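/- arXiv:1407.8415 — 5 statements merged into one kernel-verified Lean document; each statement's English description precedes it below -/
import Mathlib

section
/- Let q > 2 be a prime power and n ≥ 1. Let S be an F_q-linear subspace of F_{q^n} containing 1, and suppose that for all nonzero x, z ∈ S with x ≠ z and all t ∈ F_q, the element (t·x·z)/(z + (t−1)·x) lies in S whenever z + (t−1)·x ≠ 0. Then for all nonzero x, y ∈ S, the element x²/y lies in S. -/
/-!
If `y` is a `K`-multiple `k • x`, then `x ^ 2 / y = k⁻¹ • x`. Otherwise pick `r ∈ K` with
`r ≠ 0, -1` (possible as `q > 2`) and apply the closure hypothesis to `x` and `z = y - r x`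
with `t = r + 1`: the denominator `z + r x` is `y`, and the resulting element
`(r + 1) x (y - r x) / y = (r + 1) x - r (r + 1) x ^ 2 / y` lies in `S`, so `x ^ 2 / y` does too.
-/

theorem Fintype.exists_ne_ne_of_two_lt_card {α : Type*} [Fintype α]
    (h : 2 < Fintype.card α) (a b : α) : ∃ c, c ≠ a ∧ c ≠ b := by
  classical
  by_contra! hab
  have hsub : (Finset.univ : Finset α) ⊆ {a, b} := fun c _ => by
    by_cases hc : c = a
    · simp [hc]
    · simp [hab c hc]
  have := (Finset.card_le_card hsub).trans Finset.card_le_two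
  rw [Finset.card_univ] at this
  omega

theorem sq_div_smul_self {K L : Type*} [Field K] [Field L] [Algebra K L] (k : K) (x : L) :
    x ^ 2 / (k • x) = k⁻¹ • x := by
  rcases eq_or_ne k 0 with rfl | hk
  · simp
  rcases eq_or_ne x 0 with rfl | hx
  · simp
  rw [Algebra.smul_def, Algebra.smul_def, map_inv₀]
  have : algebraMap K L k ≠ 0 := (map_ne_zero _).mpr hk
  field_simp

theorem sq_div_eq_inv_mul_sub_mul_div {L : Type*} [Field L] {c x y : L} (hc : c ≠ 0)
    (hc' : c + 1 ≠ 0) (hy : y ≠ 0) :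
    x ^ 2 / y = (c * (c + 1))⁻¹ * ((c + 1) * x - (c + 1) * x * (y - c * x) / y) := by
  field_simp
  ring

theorem sq_div_mem_of_not_mem_span_singleton {K L : Type*} [Field K] [Field L] [Algebra K L]
    {S : Submodule K L}
    (hcl : ∀ x ∈ S, ∀ z ∈ S, x ≠ 0 → z ≠ 0 → x ≠ z → ∀ t : K,
      z + (algebraMap K L t - 1) * x ≠ 0 →
      algebraMap K L t * x * z / (z + (algebraMap K L t - 1) * x) ∈ S)
    {x y : L} (hx : x ∈ S) (hy : y ∈ S) (hx0 : x ≠ 0) (hy0 : y ≠ 0)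
    (hxy : y ∉ K ∙ x) {r : K} (hr : r ≠ 0) (hr' : r ≠ -1) :
    x ^ 2 / y ∈ S := by
  set c := algebraMap K L r
  have hc : c ≠ 0 := (map_ne_zero _).mpr hr
  have hc' : c + 1 ≠ 0 := by
    rw [← map_one (algebraMap K L), ← map_add, map_ne_zero]
    exact fun h => hr' (eq_neg_of_add_eq_zero_left h)
  have not_multiple (k : K) : y - algebraMap K L k * x ≠ 0 := fun h =>
    hxy (Submodule.mem_span_singleton.mpr ⟨k, by rw [Algebra.smul_def]; linear_combination -h⟩)
  have hden : y - c * x + (algebraMap K L (r + 1) - 1) * x = y := by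
    rw [map_add, map_one]; ring
  have hz : y - c * x ∈ S := S.sub_mem hy (by simpa [Algebra.smul_def] using S.smul_mem r hx)
  have hxz : x ≠ y - c * x := fun h => not_multiple (r + 1) (by
    rw [map_add, map_one]; linear_combination -h)
  have hu := hcl x hx _ hz hx0 (not_multiple r) hxz (r + 1) (by rwa [hden])
  rw [hden] at hu
  have hmem := S.smul_mem (r * (r + 1))⁻¹ (S.sub_mem (S.smul_mem (r + 1) hx) hu)
  rw [sq_div_eq_inv_mul_sub_mul_div hc hc' hy0]
  simpa [Algebra.smul_def, c] using hmem

theorem stmt1_general (q : ℕ) (hq : 2 < q)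
    (K L : Type) [Field K] [Field L] [Fintype K] [Algebra K L]
    (hK : Fintype.card K = q)
    (S : Submodule K L)
    (hcl : ∀ x ∈ S, ∀ z ∈ S, x ≠ 0 → z ≠ 0 → x ≠ z → ∀ t : K,
      z + (algebraMap K L t - 1) * x ≠ 0 →
      algebraMap K L t * x * z / (z + (algebraMap K L t - 1) * x) ∈ S) :
    ∀ x ∈ S, ∀ y ∈ S, x ≠ 0 → y ≠ 0 → x ^ 2 / y ∈ S := by
  intro x hx y hy hx0 hy0
  by_cases hxy : y ∈ K ∙ x
  · obtain ⟨k, rfl⟩ := Submodule.mem_span_singleton.mp hxy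
    rw [sq_div_smul_self]
    exact S.smul_mem _ hx
  · obtain ⟨r, hr, hr'⟩ := Fintype.exists_ne_ne_of_two_lt_card (hK ▸ hq) (0 : K) (-1)
    exact sq_div_mem_of_not_mem_span_singleton hcl hx hy hx0 hy0 hxy hr hr'

theorem stmt1 (q n : ℕ) (hq : 2 < q) (hn : 1 ≤ n)
    (K L : Type) [Field K] [Field L] [Fintype K] [Fintype L] [Algebra K L]
    (hK : Fintype.card K = q) (hL : Fintype.card L = q ^ n)
    (S : Submodule K L) (h1 : (1 : L) ∈ S)
    (hcl : ∀ x ∈ S, ∀ z ∈ S, x ≠ 0 → z ≠ 0 → x ≠ z → ∀ t : K,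
      z + (algebraMap K L t - 1) * x ≠ 0 →
      algebraMap K L t * x * z / (z + (algebraMap K L t - 1) * x) ∈ S) :
    ∀ x ∈ S, ∀ y ∈ S, x ≠ 0 → y ≠ 0 → x ^ 2 / y ∈ S :=
  stmt1_general q hq K L hK S hcl
end

section
/- Let q = 2^h with h ≥ 1 and let n ≥ 1. Let S be an F_q-linear subspace of F_{q^n} containing 1 such that for all nonzero x, y ∈ S, the element x²/y lies in S. Then S is closed under multiplication, and hence S is a subfield of F_{q^n} containing F_q. -/
/-!
In characteristic 2 squaring is injective, so on a finite set `S` closed under `x ↦ x ^ 2 / 1`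
it is a bijection: every `v ∈ S` is `u ^ 2` with `u ∈ S`. Then `v / w = u ^ 2 / w ∈ S`, and
`v * w = v ^ 2 / (v / w) ∈ S`. Inverses are `1 ^ 2 / a`, so a subspace with these properties is a
subfield.
-/

def SqDivClosed {L : Type*} [Field L] (S : Set L) : Prop :=
  ∀ x ∈ S, ∀ y ∈ S, x ≠ 0 → y ≠ 0 → x ^ 2 / y ∈ S

namespace SqDivClosed

variable {L : Type*} [Field L] {S : Set L}

theorem sq_mem (hS : SqDivClosed S) (h0 : (0 : L) ∈ S) (h1 : (1 : L) ∈ S) {x : L} (hx : x ∈ S) :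
    x ^ 2 ∈ S := by
  rcases eq_or_ne x 0 with rfl | hx0
  · simpa using h0
  · simpa using hS x hx 1 h1 hx0 one_ne_zero

theorem inv_mem (hS : SqDivClosed S) (h0 : (0 : L) ∈ S) (h1 : (1 : L) ∈ S) {x : L} (hx : x ∈ S) :
    x⁻¹ ∈ S := by
  rcases eq_or_ne x 0 with rfl | hx0
  · simpa using h0
  · simpa using hS 1 h1 x hx one_ne_zero hx0

theorem exists_sq_eq [CharP L 2] (hS : SqDivClosed S) (hfin : S.Finite) (h0 : (0 : L) ∈ S)
    (h1 : (1 : L) ∈ S) {v : L} (hv : v ∈ S) : ∃ u ∈ S, u ^ 2 = v := by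
  have hmaps : Set.MapsTo (· ^ 2) S S := fun _ hx => hS.sq_mem h0 h1 hx
  have hinj : Set.InjOn (· ^ 2) S := (frobenius_inj L 2).injOn
  exact ((hfin.injOn_iff_bijOn_of_mapsTo hmaps).mp hinj).surjOn hv

theorem mul_mem [CharP L 2] (hS : SqDivClosed S) (hfin : S.Finite) (h0 : (0 : L) ∈ S)
    (h1 : (1 : L) ∈ S) {v w : L} (hv : v ∈ S) (hw : w ∈ S) : v * w ∈ S := by
  rcases eq_or_ne v 0 with rfl | hv0
  · simpa using h0
  rcases eq_or_ne w 0 with rfl | hw0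
  · simpa using h0
  obtain ⟨u, hu, rfl⟩ := hS.exists_sq_eq hfin h0 h1 hv
  have hu0 : u ≠ 0 := by rintro rfl; simp at hv0
  have hdiv : u ^ 2 / w ∈ S := hS u hu w hw hu0 hw0
  have := hS _ hv _ hdiv hv0 (div_ne_zero hv0 hw0)
  rwa [show (u ^ 2) ^ 2 / (u ^ 2 / w) = u ^ 2 * w by field_simp] at this

end SqDivClosed

def Submodule.toSubfield {K L : Type*} [Field K] [Field L] [Algebra K L] (S : Submodule K L)
    (h1 : (1 : L) ∈ S) (hmul : ∀ v ∈ S, ∀ w ∈ S, v * w ∈ S) (hinv : ∀ v ∈ S, v⁻¹ ∈ S) :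
    Subfield L where
  carrier := S
  mul_mem' hv hw := hmul _ hv _ hw
  one_mem' := h1
  add_mem' := S.add_mem
  zero_mem' := S.zero_mem
  neg_mem' := S.neg_mem
  inv_mem' := hinv

theorem stmt4_general (q n h : ℕ) (hqe : q = 2 ^ h)
    (K L : Type) [Field K] [Field L] [Fintype L] [Algebra K L]
    (hL : Fintype.card L = q ^ n)
    (S : Submodule K L) (h1 : (1 : L) ∈ S)
    (hcl : ∀ x ∈ S, ∀ y ∈ S, x ≠ 0 → y ≠ 0 → x ^ 2 / y ∈ S) :
    (∀ v ∈ S, ∀ w ∈ S, v * w ∈ S) ∧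
    ∃ F : Subfield L, (S : Set L) = ↑F ∧ Set.range (algebraMap K L) ⊆ ↑F := by
  have : CharP L 2 := charP_of_card_eq_prime_pow (f := h * n) (by rw [hL, hqe, pow_mul])
  have hS : SqDivClosed (S : Set L) := hcl
  have hmul : ∀ v ∈ S, ∀ w ∈ S, v * w ∈ S := fun _ hv _ hw =>
    hS.mul_mem (Set.toFinite _) S.zero_mem h1 hv hw
  have hinv : ∀ v ∈ S, v⁻¹ ∈ S := fun _ hv => hS.inv_mem S.zero_mem h1 hv
  refine ⟨hmul, S.toSubfield h1 hmul hinv, rfl, ?_⟩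
  rintro _ ⟨c, rfl⟩
  exact Submodule.one_le.mpr h1 (Submodule.algebraMap_mem c)

theorem stmt4 (q n h : ℕ) (hh : 1 ≤ h) (hqe : q = 2 ^ h) (hn : 1 ≤ n)
    (K L : Type) [Field K] [Field L] [Fintype K] [Fintype L] [Algebra K L]
    (hK : Fintype.card K = q) (hL : Fintype.card L = q ^ n)
    (S : Submodule K L) (h1 : (1 : L) ∈ S)
    (hcl : ∀ x ∈ S, ∀ y ∈ S, x ≠ 0 → y ≠ 0 → x ^ 2 / y ∈ S) :
    (∀ v ∈ S, ∀ w ∈ S, v * w ∈ S) ∧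
    ∃ F : Subfield L, (S : Set L) = ↑F ∧ Set.range (algebraMap K L) ⊆ ↑F :=
  stmt4_general q n h hqe K L hL S h1 hcl
end

section
/- Let q > 2 be a prime power and n ≥ 1. Let S be a subset of F_{q^n} with 0, 1 ∈ S, such that S is an F_q-affine-combination-closed set and for all nonzero distinct x, z ∈ S and t ∈ F_q with z + (t−1)x ≠ 0, the element t·x·z/(z + (t−1)x) lies in S. Then S is a subfield of F_{q^n}, i.e., S = F_{q^t} for some divisor t of n. -/
/-!
Affine closure with a scalar `t₀ ∉ {0, 1}` makes `S` an `𝔽_q`-subspace. The second closure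
condition says that the reciprocals of `S` are closed under affine combinations,
`1 / w = t⁻¹ (1 / x) + (1 - t⁻¹) (1 / z)`; applied with `x = 1` it gives closure under inversion.
An additive group containing `1` and closed under inversion is closed under `(a, b) ↦ a² b` by
Hua's identity, hence under products: by polarization when `2 ≠ 0`, and in characteristic `2`
because squaring is a bijection of the finite set `S`. So `S` is a subfield, of order `q ^ t`
with `t = [S : 𝔽_q]` dividing `n = [𝔽_{q^n} : 𝔽_q]`.
-/

open Module

section LineClosed

variable {K V : Type*} [Field K] [AddCommGroup V] [Module K V]

def Submodule.ofLineClosed (S : Set V) {t₀ : K} (ht₀ : t₀ ≠ 0) (ht₁ : t₀ ≠ 1) (h0 : 0 ∈ S)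
    (haff : ∀ x ∈ S, ∀ y ∈ S, ∀ t : K, (1 - t) • x + t • y ∈ S) : Submodule K V where
  carrier := S
  zero_mem' := h0
  smul_mem' t y hy := by simpa using haff 0 h0 y hy t
  add_mem' {x y} hx hy := by
    have hsmul : ∀ (t : K), ∀ y ∈ S, t • y ∈ S := fun t y hy => by simpa using haff 0 h0 y hy t
    have h1t : 1 - t₀ ≠ 0 := sub_ne_zero.mpr ht₁.symm
    simpa [smul_smul, h1t, ht₀] using
      haff _ (hsmul (1 - t₀)⁻¹ x hx) _ (hsmul t₀⁻¹ y hy) t₀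

end LineClosed

section Hua

variable {L : Type*} [Field L]

theorem hua_identity {a b : L} (ha : a ≠ 0) (hb : b ≠ 0) (hab : a * b + 1 ≠ 0) :
    (a⁻¹ - (a + b⁻¹)⁻¹)⁻¹ = a ^ 2 * b + a := by
  have : a + b⁻¹ = (a * b + 1) / b := by field_simp
  rw [this, inv_div]
  field_simp
  ring

namespace AddSubgroup

variable {A : AddSubgroup L}

theorem sq_mul_mem_of_inv_mem (inv_mem : ∀ x ∈ A, x⁻¹ ∈ A) {a b : L} (ha : a ∈ A) (hb : b ∈ A) :
    a ^ 2 * b ∈ A := by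
  rcases eq_or_ne a 0 with rfl | ha0
  · simp
  rcases eq_or_ne b 0 with rfl | hb0
  · simp
  rcases eq_or_ne (a * b + 1) 0 with hab | hab
  · have : a ^ 2 * b = -a := by linear_combination a * hab
    rw [this]
    exact A.neg_mem ha
  · have hua : (a⁻¹ - (a + b⁻¹)⁻¹)⁻¹ ∈ A :=
      inv_mem _ (A.sub_mem (inv_mem a ha) (inv_mem _ (A.add_mem ha (inv_mem b hb))))
    rw [hua_identity ha0 hb0 hab] at hua
    simpa using A.sub_mem hua ha

theorem mul_mem_of_inv_mem_of_two_ne_zero (one_mem : (1 : L) ∈ A) (inv_mem : ∀ x ∈ A, x⁻¹ ∈ A)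
    (h2 : (2 : L) ≠ 0) {a b : L} (ha : a ∈ A) (hb : b ∈ A) : a * b ∈ A := by
  have two_mul_mem : ∀ {x y}, x ∈ A → y ∈ A → 2 * x * y ∈ A := fun {x y} hx hy => by
    have := A.sub_mem (A.sub_mem (sq_mul_mem_of_inv_mem inv_mem (A.add_mem hx one_mem) hy)
      (sq_mul_mem_of_inv_mem inv_mem hx hy)) hy
    convert this using 1
    ring
  have half_mem : a / 2 ∈ A := by
    have := sq_mul_mem_of_inv_mem inv_mem (inv_mem _ (A.add_mem one_mem one_mem))
      (A.add_mem ha ha)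
    convert this using 1
    rw [one_add_one_eq_two]
    field_simp
    ring
  convert two_mul_mem half_mem hb using 1
  field_simp

theorem exists_sq_eq_of_two_eq_zero [Finite L] (one_mem : (1 : L) ∈ A)
    (inv_mem : ∀ x ∈ A, x⁻¹ ∈ A) (h2 : (2 : L) = 0) {b : L} (hb : b ∈ A) :
    ∃ s ∈ A, s ^ 2 = b := by
  have maps : Set.MapsTo (· ^ 2) (A : Set L) A := fun a ha => by
    simpa using sq_mul_mem_of_inv_mem inv_mem ha one_mem
  have inj : Set.InjOn (· ^ 2) (A : Set L) := fun a _ b _ hab => by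
    have : (a - b) ^ 2 = 0 := by linear_combination hab - b * (a - b) * h2
    exact sub_eq_zero.mp (pow_eq_zero_iff two_ne_zero |>.mp this)
  exact ((A : Set L).toFinite.injOn_iff_bijOn_of_mapsTo maps).mp inj |>.surjOn hb

def toSubfield [Finite L] (A : AddSubgroup L) (one_mem : (1 : L) ∈ A)
    (inv_mem : ∀ x ∈ A, x⁻¹ ∈ A) : Subfield L where
  __ := A
  one_mem' := one_mem
  inv_mem' := inv_mem
  mul_mem' {a b} ha hb := by
    by_cases h2 : (2 : L) = 0
    · obtain ⟨s, hs, rfl⟩ := exists_sq_eq_of_two_eq_zero one_mem inv_mem h2 hb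
      simpa [mul_comm] using sq_mul_mem_of_inv_mem inv_mem hs ha
    · exact mul_mem_of_inv_mem_of_two_ne_zero one_mem inv_mem h2 ha hb

end AddSubgroup

end Hua

section Inversion

variable {K L : Type*} [Field K] [Field L] [Algebra K L]

theorem Submodule.inv_mem_of_reciprocal_lineClosed (S : Submodule K L) (h1 : (1 : L) ∈ S)
    {c : K} (hc0 : c ≠ 0) (hc1 : c + 1 ≠ 0)
    (hcl : ∀ x ∈ S, ∀ z ∈ S, x ≠ 0 → z ≠ 0 → x ≠ z → ∀ t : K,
      z + (algebraMap K L t - 1) * x ≠ 0 →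
      algebraMap K L t * x * z / (z + (algebraMap K L t - 1) * x) ∈ S)
    {y : L} (hy : y ∈ S) : y⁻¹ ∈ S := by
  by_cases hyK : y ∈ Set.range (algebraMap K L)
  · obtain ⟨a, rfl⟩ := hyK
    simpa [Algebra.smul_def] using S.smul_mem a⁻¹ h1
  have hy0 : y ≠ 0 := fun h => hyK ⟨0, by simp [h]⟩
  have hyc : y - algebraMap K L c ≠ 0 := fun h => hyK ⟨c, (sub_eq_zero.mp h).symm⟩
  have hyc1 : 1 ≠ y - algebraMap K L c := fun h => hyK ⟨1 + c, by simp [h]⟩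
  have hden : y - algebraMap K L c + (algebraMap K L (c + 1) - 1) * 1 = y := by simp
  have hcS : algebraMap K L c ∈ S := by simpa [Algebra.smul_def] using S.smul_mem c h1
  have hw := hcl 1 h1 _ (S.sub_mem hy hcS) one_ne_zero hyc hyc1 (c + 1) (by rwa [hden])
  rw [hden] at hw
  -- `w = (c + 1) (1 - c / y)` is affine in `y⁻¹`
  have : y⁻¹ = ((c + 1) * c)⁻¹ • ((c + 1) • (1 : L) - algebraMap K L (c + 1) * 1 *
      (y - algebraMap K L c) / y) := by
    simp only [Algebra.smul_def, map_inv₀, map_mul, map_add, map_one]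
    have : algebraMap K L c ≠ 0 := by simpa using hc0
    have : algebraMap K L c + 1 ≠ 0 := by simpa using (map_ne_zero (algebraMap K L)).mpr hc1
    field_simp
    ring
  rw [this]
  exact S.smul_mem _ (S.sub_mem (S.smul_mem _ h1) hw)

end Inversion

theorem IntermediateField.exists_dvd_finrank_natCard_eq_pow {K L : Type*} [Field K] [Field L]
    [Algebra K L] [Fintype K] [Finite L] (E : IntermediateField K L) :
    ∃ t, t ∣ finrank K L ∧ Nat.card E = Fintype.card K ^ t := by
  have : Fintype L := Fintype.ofFinite L
  have : Fintype E := Fintype.ofFinite E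
  exact ⟨finrank K E, Dvd.intro _ (finrank_mul_finrank K E L),
    by rw [Nat.card_eq_fintype_card, Module.card_eq_pow_finrank (K := K) (V := E)]⟩

theorem stmt5_general (q n : ℕ) (hq : 2 < q)
    (K L : Type) [Field K] [Field L] [Fintype K] [Fintype L] [Algebra K L]
    (hK : Fintype.card K = q) (hL : Fintype.card L = q ^ n)
    (S : Set L) (h0 : (0 : L) ∈ S) (h1 : (1 : L) ∈ S)
    (haff : ∀ x ∈ S, ∀ y ∈ S, ∀ t : K,
      (1 - algebraMap K L t) * x + algebraMap K L t * y ∈ S)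
    (hcl : ∀ x ∈ S, ∀ z ∈ S, x ≠ 0 → z ≠ 0 → x ≠ z → ∀ t : K,
      z + (algebraMap K L t - 1) * x ≠ 0 →
      algebraMap K L t * x * z / (z + (algebraMap K L t - 1) * x) ∈ S) :
    ∃ F : Subfield L, S = ↑F ∧ ∃ t : ℕ, t ∣ n ∧ Nat.card F = q ^ t := by
  have three_le : 3 ≤ ENat.card K := by simp [hK]; exact_mod_cast hq
  obtain ⟨t₀, ht₀, ht₁⟩ := ENat.exists_ne_ne_of_three_le three_le 0 1
  obtain ⟨c, hc0, hc1⟩ := ENat.exists_ne_ne_of_three_le three_le 0 (-1)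
  let V : Submodule K L := .ofLineClosed S ht₀ ht₁ h0 fun x hx y hy t => by
    simpa [Algebra.smul_def] using haff x hx y hy t
  let F : Subfield L := V.toAddSubgroup.toSubfield h1 fun y hy =>
    V.inv_mem_of_reciprocal_lineClosed h1 hc0 (fun h => hc1 (eq_neg_of_add_eq_zero_left h)) hcl hy
  have hKF : ∀ a, algebraMap K L a ∈ V := fun a => by
    simpa [Algebra.smul_def] using V.smul_mem a h1
  obtain ⟨t, ht, hcard⟩ := (F.toIntermediateField hKF).exists_dvd_finrank_natCard_eq_pow
  have hn : finrank K L = n :=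
    Nat.pow_right_injective hq.le (by simp only [← hK, ← Module.card_eq_pow_finrank, hL])
  exact ⟨F, rfl, t, hn ▸ ht, hK ▸ hcard⟩

theorem stmt5 (q n : ℕ) (hq : 2 < q) (hn : 1 ≤ n)
    (K L : Type) [Field K] [Field L] [Fintype K] [Fintype L] [Algebra K L]
    (hK : Fintype.card K = q) (hL : Fintype.card L = q ^ n)
    (S : Set L) (h0 : (0 : L) ∈ S) (h1 : (1 : L) ∈ S)
    (haff : ∀ x ∈ S, ∀ y ∈ S, ∀ t : K,
      (1 - algebraMap K L t) * x + algebraMap K L t * y ∈ S)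
    (hcl : ∀ x ∈ S, ∀ z ∈ S, x ≠ 0 → z ≠ 0 → x ≠ z → ∀ t : K,
      z + (algebraMap K L t - 1) * x ≠ 0 →
      algebraMap K L t * x * z / (z + (algebraMap K L t - 1) * x) ∈ S) :
    ∃ F : Subfield L, S = ↑F ∧ ∃ t : ℕ, t ∣ n ∧ Nat.card F = q ^ t :=
  stmt5_general q n hq K L hK hL S h0 h1 haff hcl
end

section
/- Let V be a vector space of dimension 3n over F_q and let A be a family of n-dimensional subspaces of V such that for any three distinct members E_i, E_j, E_k of A, the subspace E_k intersects E_i + E_j trivially (equivalently, any three distinct members span V and the sum is direct). Then |A| ≤ q^n + 2. -/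
/-!
Fix `E₀ ∈ A`. For distinct `E, E' ∈ A \ {E₀}` the modular law and `E ∩ (E' + E₀) = 0` give
`(E + E₀) ∩ (E' + E₀) = E₀`, so the sets `(E + E₀) \ E₀` are disjoint subsets of `V \ E₀`
(these are the nonzero vectors of a partial spread in `V / E₀`). Each has `q ^ 2n - q ^ n`
elements, whence `(|A| - 1) (q ^ 2n - q ^ n) ≤ q ^ 3n - q ^ n = (q ^ n + 1) (q ^ 2n - q ^ n)`.
-/

open Module

theorem Set.sum_ncard_sdiff_le_ncard_compl {α ι : Type*} [Finite α] {E : Set α} {W : ι → Set α}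
    {s : Finset ι} (h : ∀ i ∈ s, ∀ j ∈ s, i ≠ j → W i ∩ W j ⊆ E) :
    ∑ i ∈ s, (W i \ E).ncard ≤ Eᶜ.ncard := by
  have hdisj : (s : Set ι).PairwiseDisjoint fun i ↦ W i \ E := by
    rintro i hi j hj hij
    refine Set.disjoint_left.2 ?_
    rintro x ⟨hxi, hxE⟩ ⟨hxj, -⟩
    exact hxE (h i hi j hj hij ⟨hxi, hxj⟩)
  calc ∑ i ∈ s, (W i \ E).ncard = (⋃ i ∈ (s : Set ι), W i \ E).ncard := by
        rw [s.finite_toSet.ncard_biUnion (fun _ _ ↦ Set.toFinite _) hdisj,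
          finsum_mem_coe_finset]
    _ ≤ Eᶜ.ncard := Set.ncard_le_ncard (Set.iUnion₂_subset fun _ _ ↦ Set.sdiff_subset_compl _ _)

theorem Submodule.ncard_eq_pow_finrank {K V : Type*} [DivisionRing K] [AddCommGroup V]
    [Module K V] [Module.Finite K V] (W : Submodule K V) :
    (W : Set V).ncard = Nat.card K ^ finrank K W := by
  rw [← Nat.card_coe_set_eq, SetLike.coe_sort_coe, Module.natCard_eq_pow_finrank (K := K)]

theorem Nat.le_add_one_of_mul_sq_sub_le {a m : ℕ} (ha : 1 < a)
    (h : m * (a ^ 2 - a) ≤ a ^ 3 - a) : m ≤ a + 1 := by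
  have ha2 : a < a ^ 2 := lt_self_pow₀ ha (by norm_num)
  have hfactor : a ^ 3 - a = (a + 1) * (a ^ 2 - a) := by
    have : a ≤ a ^ 3 := Nat.le_self_pow (by norm_num) a
    zify [this, ha2.le]; ring
  rw [hfactor] at h
  exact Nat.le_of_mul_le_mul_right h (Nat.sub_pos_of_lt ha2)

def IsPseudoArc {R V : Type*} [Semiring R] [AddCommMonoid V] [Module R V]
    (A : Set (Submodule R V)) : Prop :=
  ∀ E₁ ∈ A, ∀ E₂ ∈ A, ∀ E₃ ∈ A, E₁ ≠ E₂ → E₁ ≠ E₃ → E₂ ≠ E₃ → E₃ ⊓ (E₁ ⊔ E₂) = ⊥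

namespace IsPseudoArc

section Ring

variable {R V : Type*} [Ring R] [AddCommGroup V] [Module R V] {A : Set (Submodule R V)}
  {E E' E₀ : Submodule R V}

theorem inf_eq_bot (hA : IsPseudoArc A) (h3 : 2 < A.ncard) (hE : E ∈ A) (hE' : E' ∈ A)
    (hne : E ≠ E') : E ⊓ E' = ⊥ := by
  obtain ⟨F, hF, hFE, hFE'⟩ : ∃ F ∈ A, F ≠ E ∧ F ≠ E' := by
    by_contra! h
    have hsub : A ⊆ {E, E'} := fun F hF ↦ or_iff_not_imp_left.2 (h F hF)
    have := Set.ncard_le_ncard hsub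
    rw [Set.ncard_pair hne] at this
    omega
  have hbot : E' ⊓ (E ⊔ F) = ⊥ := hA E hE F hF E' hE' hFE.symm hne hFE'
  exact eq_bot_iff.2 (hbot ▸ le_inf inf_le_right (inf_le_left.trans le_sup_left))

theorem sup_inf_sup_eq (hA : IsPseudoArc A) (hE : E ∈ A) (hE' : E' ∈ A) (hE₀ : E₀ ∈ A)
    (hne : E ≠ E') (hEE₀ : E ≠ E₀) (hE'E₀ : E' ≠ E₀) : (E ⊔ E₀) ⊓ (E' ⊔ E₀) = E₀ := by
  have hbot : E ⊓ (E' ⊔ E₀) = ⊥ := hA E' hE' E₀ hE₀ E hE hE'E₀ hne.symm hEE₀.symm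
  rw [sup_comm, sup_inf_assoc_of_le E le_sup_right, hbot, sup_bot_eq]

end Ring

variable {K V : Type*} [DivisionRing K] [AddCommGroup V] [Module K V] [Module.Finite K V]
  {A : Set (Submodule K V)} {n : ℕ} {E E₀ : Submodule K V}

theorem ncard_sup_sdiff [Finite K] (hA : IsPseudoArc A) (h3 : 2 < A.ncard)
    (hrank : ∀ W ∈ A, finrank K W = n) (hE : E ∈ A) (hE₀ : E₀ ∈ A) (hne : E ≠ E₀) :
    (((E ⊔ E₀ : Submodule K V) : Set V) \ E₀).ncard = Nat.card K ^ (2 * n) - Nat.card K ^ n := by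
  have hsup : finrank K ↥(E ⊔ E₀) = 2 * n := by
    have := Submodule.finrank_sup_add_finrank_inf_eq E E₀
    rw [hA.inf_eq_bot h3 hE hE₀ hne, finrank_bot, hrank E hE, hrank E₀ hE₀] at this
    omega
  have : Finite V := Module.finite_of_finite K
  rw [Set.ncard_sdiff (SetLike.coe_subset_coe.2 le_sup_right), Submodule.ncard_eq_pow_finrank,
    Submodule.ncard_eq_pow_finrank, hsup, hrank E₀ hE₀]

end IsPseudoArc

theorem stmt8 (q n : ℕ) (K V : Type) [Field K] [Fintype K] (hK : Fintype.card K = q)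
    [AddCommGroup V] [Module K V] [FiniteDimensional K V]
    (hdim : Module.finrank K V = 3 * n)
    (A : Set (Submodule K V))
    (hA : ∀ W ∈ A, Module.finrank K W = n)
    (hgen : ∀ E₁ ∈ A, ∀ E₂ ∈ A, ∀ E₃ ∈ A,
      E₁ ≠ E₂ → E₁ ≠ E₃ → E₂ ≠ E₃ → E₃ ⊓ (E₁ ⊔ E₂) = ⊥) :
    A.ncard ≤ q ^ n + 2 := by
  have harc : IsPseudoArc A := hgen
  have : Finite V := Module.finite_of_finite K
  have hq : Nat.card K = q := Nat.card_eq_fintype_card.trans hK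
  by_contra! hbig
  have h3 : 2 < A.ncard := by omega
  have hn : n ≠ 0 := by
    rintro rfl
    obtain ⟨E, hE, E', hE', -, -, hne, -, -⟩ := (Set.two_lt_ncard).1 h3
    exact hne ((Submodule.finrank_eq_zero.1 (hA E hE)).trans
      (Submodule.finrank_eq_zero.1 (hA E' hE')).symm)
  obtain ⟨E₀, hE₀⟩ := Set.nonempty_of_ncard_ne_zero (by omega : A.ncard ≠ 0)
  set s := (Set.toFinite A).toFinset.erase E₀
  have hs : ∀ E ∈ s, E ∈ A ∧ E ≠ E₀ := by simp [s, and_comm]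
  have hcount := Set.sum_ncard_sdiff_le_ncard_compl (E := (E₀ : Set V))
    (W := fun E ↦ ((E ⊔ E₀ : Submodule K V) : Set V)) (s := s) fun E hE E' hE' hne ↦
      (harc.sup_inf_sup_eq (hs E hE).1 (hs E' hE').1 hE₀ hne (hs E hE).2 (hs E' hE').2).le
  rw [Finset.sum_congr rfl fun E hE ↦ harc.ncard_sup_sdiff h3 hA (hs E hE).1 hE₀ (hs E hE).2,
    Finset.sum_const, smul_eq_mul, Finset.card_erase_of_mem ((Set.toFinite A).mem_toFinset.2 hE₀),
    ← Set.ncard_eq_toFinset_card A, Set.ncard_compl,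
    Module.natCard_eq_pow_finrank (K := K) (V := V), Submodule.ncard_eq_pow_finrank,
    hdim, hA E₀ hE₀, hq, pow_mul', pow_mul'] at hcount
  have hqn : 1 < q ^ n := Nat.one_lt_pow hn (hK ▸ Fintype.one_lt_card)
  have := Nat.le_add_one_of_mul_sq_sub_le hqn hcount
  omega
end

section
/- Let q be a prime power with q > 4 and let C be a nondegenerate conic in PG(2,q) with q even, with nucleus N. For any point P on C, the set (C ∪ {N}) \ {P} is not a conic. -/
open scoped LinearAlgebra.Projectivization

/-- A quadratic form on `F³` defines a nondegenerate (nonsingular) conic: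
it is nonzero and has no singular projective point. -/
def IsNondegConicForm (F : Type) [Field F]
    (Q : QuadraticForm F (Fin 3 → F)) : Prop :=
  Q ≠ 0 ∧ ∀ v : Fin 3 → F, v ≠ 0 → Q v = 0 →
    ∃ w : Fin 3 → F, QuadraticMap.polar (⇑Q) v w ≠ 0

/-!
Write `C : Q = 0`, `C' : Q' = 0` and `b` for the polar form of `Q`, and suppose
`C' = (C ∪ {N}) \ {P}`. Pick a second point `v ∈ C` with `b(P, v) ≠ 0`. Since `b(N, ·) = 0`,
in the frame `P, v, N` we have `Q(xP + yv + zN) = b(P,v) x y + Q(N) z²`, so the points of `C`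
other than `P` and `v` are `b(P,v) P - Q(N) t² v + b(P,v) t N` with `t ≠ 0`. As `Q'` vanishes at
`v` (killing the `t⁴` term), at `N` and at all these points, `Q'` along the parametrisation is a
cubic in `t` with `q - 1 > 3` roots, hence zero; its constant term `b(P,v)² Q'(P)` then forces
`Q'(P) = 0`, i.e. `P ∈ C'`, a contradiction.
-/

open QuadraticMap Polynomial

namespace QuadraticMap

variable {R M : Type*} [CommRing R] [AddCommGroup M] [Module R M]

theorem map_smul_add_smul_add_smul (Q : QuadraticForm R M) (u v w : M) (x y z : R) :
    Q (x • u + y • v + z • w) =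
      x * x * Q u + y * y * Q v + z * z * Q w
      + x * y * polar Q u v + y * z * polar Q v w + x * z * polar Q u w := by
  rw [QuadraticMap.map_add Q (x • u + y • v) (z • w),
    QuadraticMap.map_add Q (x • u) (y • v)]
  simp only [polar_add_left, polar_smul_left, polar_smul_right, QuadraticMap.map_smul,
    smul_eq_mul]
  ring

theorem polar_self_eq_zero {Q : QuadraticForm R M} {p : M} (hp : Q p = 0) : polar Q p p = 0 := by
  rw [polar_self, hp, smul_zero]

theorem exists_map_eq_zero_polar_ne_zero [IsDomain R] {Q : QuadraticForm R M} {p w : M}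
    (hp : Q p = 0) (hw : polar Q p w ≠ 0) : ∃ v, Q v = 0 ∧ polar Q p v ≠ 0 := by
  refine ⟨-Q w • p + polar Q p w • w, ?_, ?_⟩
  · rw [QuadraticMap.map_add Q, QuadraticMap.map_smul, QuadraticMap.map_smul, polar_smul_left,
      polar_smul_right, hp, smul_eq_mul, smul_eq_mul, smul_eq_mul, smul_eq_mul]
    ring
  · rw [polar_add_right, polar_smul_right, polar_smul_right, polar_self_eq_zero hp,
      smul_eq_mul, smul_eq_mul, mul_zero, zero_add]
    exact mul_ne_zero hw hw

/-- The point `(b, -c t², b t)` in the frame `p, v, n`, where `b = polar Q p v` and `c = Q n`.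
When `p, v` are isotropic and `n` is orthogonal to both, it traces the conic `Q = 0` in that
plane minus `v`, passing through `p` only at `t = 0`. -/
def conicParam (Q : QuadraticForm R M) (p v n : M) (t : R) : M :=
  polar Q p v • p + (-Q n * t ^ 2) • v + (polar Q p v * t) • n

variable {Q : QuadraticForm R M} {p v n : M}

theorem map_conicParam (hp : Q p = 0) (hv : Q v = 0) (hnp : polar Q n p = 0)
    (hnv : polar Q n v = 0) (t : R) : Q (conicParam Q p v n t) = 0 := by
  rw [conicParam, map_smul_add_smul_add_smul, hp, hv, polar_comm Q p n, polar_comm Q v n, hnp,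
    hnv]
  ring

theorem polar_conicParam (hp : Q p = 0) (hnp : polar Q n p = 0) (t : R) :
    polar Q p (conicParam Q p v n t) = -Q n * t ^ 2 * polar Q p v := by
  rw [conicParam, polar_add_right, polar_add_right, polar_smul_right, polar_smul_right,
    polar_smul_right, polar_self_eq_zero hp, polar_comm Q p n, hnp, smul_eq_mul, smul_eq_mul,
    smul_eq_mul]
  ring

theorem map_conicParam_of_map_eq_zero (Q' : QuadraticForm R M) (hv : Q' v = 0) (hn : Q' n = 0)
    (t : R) :
    Q' (conicParam Q p v n t) =
      polar Q p v ^ 2 * Q' p + polar Q p v ^ 2 * polar Q' p n * t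
        - polar Q p v * Q n * polar Q' p v * t ^ 2
        - polar Q p v * Q n * polar Q' v n * t ^ 3 := by
  rw [conicParam, map_smul_add_smul_add_smul, hv, hn]
  ring

end QuadraticMap

theorem eq_zero_of_forall_ne_zero_cubic_eq_zero {F : Type*} [Field F] [Fintype F]
    (hF : 4 < Fintype.card F) {a b c d : F}
    (h : ∀ t ≠ 0, a + b * t + c * t ^ 2 + d * t ^ 3 = 0) : a = 0 := by
  classical
  set f : F[X] := C a + C b * X + C c * X ^ 2 + C d * X ^ 3
  have hf : f = 0 := by
    refine eq_zero_of_natDegree_lt_card_of_eval_eq_zero' f (Finset.univ.erase 0) ?_ ?_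
    · intro t ht
      simpa [f] using h t (Finset.ne_of_mem_erase ht)
    · rw [Finset.card_erase_of_mem (Finset.mem_univ 0), Finset.card_univ]
      have : f.natDegree ≤ 3 := by simp only [f]; compute_degree
      omega
  simpa [f] using congrArg (coeff · 0) hf

section

variable {F V : Type*} [Field F] [AddCommGroup V] [Module F V]

theorem Projectivization.mk_ne_of_polar_rep_ne_zero {Q : QuadraticForm F V} {P : ℙ F V}
    (hP : Q P.rep = 0) {u : V} (hu : u ≠ 0) (h : polar Q P.rep u ≠ 0) :
    Projectivization.mk F u hu ≠ P := by
  intro hPu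
  rw [← Projectivization.mk_rep P, Projectivization.mk_eq_mk_iff] at hPu
  obtain ⟨k, rfl⟩ := hPu
  rw [Units.smul_def, polar_smul_right, polar_self_eq_zero hP, smul_zero] at h
  exact h rfl

theorem QuadraticMap.map_mk_rep_eq_zero_iff (Q : QuadraticForm F V) {u : V} (hu : u ≠ 0) :
    Q (Projectivization.mk F u hu).rep = 0 ↔ Q u = 0 := by
  obtain ⟨k, hk⟩ := Projectivization.exists_smul_eq_mk_rep F u hu
  rw [← hk, Units.smul_def, QuadraticMap.map_smul, smul_eq_mul, mul_eq_zero, mul_self_eq_zero,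
    or_iff_right k.ne_zero]

theorem QuadraticMap.map_eq_zero_of_forall_isotropic [Fintype F] (hF : 4 < Fintype.card F)
    {Q Q' : QuadraticForm F V} {p v n : V} (hp : Q p = 0) (hv : Q v = 0)
    (hpv : polar Q p v ≠ 0) (hn : Q n ≠ 0)
    (hnp : polar Q n p = 0) (hnv : polar Q n v = 0)
    (hQ' : ∀ u, Q u = 0 → polar Q p u ≠ 0 → Q' u = 0) (hQ'n : Q' n = 0) : Q' p = 0 := by
  have hQ'v : Q' v = 0 := hQ' v hv hpv
  have hcubic : polar Q p v ^ 2 * Q' p = 0 := by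
    refine eq_zero_of_forall_ne_zero_cubic_eq_zero hF
      (b := polar Q p v ^ 2 * polar Q' p n) (c := -(polar Q p v * Q n * polar Q' p v))
      (d := -(polar Q p v * Q n * polar Q' v n)) fun t ht => ?_
    have hpol : polar Q p (conicParam Q p v n t) ≠ 0 := by
      rw [polar_conicParam hp hnp]
      exact mul_ne_zero (mul_ne_zero (neg_ne_zero.mpr hn) (pow_ne_zero 2 ht)) hpv
    have hQ'u := hQ' _ (map_conicParam hp hv hnp hnv t) hpol
    rw [map_conicParam_of_map_eq_zero Q' hQ'v hQ'n] at hQ'u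
    linear_combination hQ'u
  exact (mul_eq_zero.mp hcubic).resolve_left (pow_ne_zero 2 hpv)

end

theorem stmt14_general (q : ℕ) (hq4 : 4 < q)
    (F : Type) [Field F] [Fintype F] (hF : Fintype.card F = q)
    (Q : QuadraticForm F (Fin 3 → F)) (hQ : IsNondegConicForm F Q)
    (N : ℙ F (Fin 3 → F))
    (hN : ∀ w : Fin 3 → F, QuadraticMap.polar (⇑Q) N.rep w = 0)
    (P : ℙ F (Fin 3 → F)) (hP : Q P.rep = 0) :
    ¬ ∃ Q' : QuadraticForm F (Fin 3 → F), IsNondegConicForm F Q' ∧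
      ({p : ℙ F (Fin 3 → F) | Q p.rep = 0} ∪ {N}) \ {P} =
        {p : ℙ F (Fin 3 → F) | Q' p.rep = 0} := by
  rintro ⟨Q', -, hS⟩
  have hQ'_eq_zero {u} (hu : u ≠ 0) (hQu : Q u = 0 ∨ Projectivization.mk F u hu = N)
      (hPu : Projectivization.mk F u hu ≠ P) : Q' u = 0 := by
    have hmem : Projectivization.mk F u hu ∈ ({p | Q p.rep = 0} ∪ {N}) \ {P} :=
      ⟨hQu.imp (map_mk_rep_eq_zero_iff Q hu).mpr id, hPu⟩
    rw [hS] at hmem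
    exact (map_mk_rep_eq_zero_iff Q' hu).mp hmem
  have hQN : Q N.rep ≠ 0 := fun h0 =>
    (hQ.2 N.rep N.rep_nonzero h0).elim fun w hw => hw (hN w)
  have hQ'N : Q' N.rep = 0 := by
    refine hQ'_eq_zero N.rep_nonzero (Or.inr N.mk_rep) ?_
    rw [N.mk_rep]
    rintro rfl
    exact hQN hP
  have hPS : P ∉ {p : ℙ F (Fin 3 → F) | Q' p.rep = 0} := by
    rw [← hS]
    exact fun h => h.2 rfl
  obtain ⟨w, hw⟩ := hQ.2 P.rep P.rep_nonzero hP
  obtain ⟨v, hv, hPv⟩ := exists_map_eq_zero_polar_ne_zero hP hw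
  refine hPS (map_eq_zero_of_forall_isotropic (hF ▸ hq4) hP hv hPv hQN (hN _) (hN _)
    (fun u hQu hPu => ?_) hQ'N)
  have hu : u ≠ 0 := by rintro rfl; simp at hPu
  exact hQ'_eq_zero hu (Or.inl hQu) (Projectivization.mk_ne_of_polar_rep_ne_zero hP hu hPu)

theorem stmt14 (q h : ℕ) (hq4 : 4 < q) (hq : q = 2 ^ h)
    (F : Type) [Field F] [Fintype F] (hF : Fintype.card F = q)
    (Q : QuadraticForm F (Fin 3 → F)) (hQ : IsNondegConicForm F Q)
    (N : ℙ F (Fin 3 → F))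
    (hN : ∀ w : Fin 3 → F, QuadraticMap.polar (⇑Q) N.rep w = 0)
    (P : ℙ F (Fin 3 → F)) (hP : Q P.rep = 0) :
    ¬ ∃ Q' : QuadraticForm F (Fin 3 → F), IsNondegConicForm F Q' ∧
      ({p : ℙ F (Fin 3 → F) | Q p.rep = 0} ∪ {N}) \ {P} =
        {p : ℙ F (Fin 3 → F) | Q' p.rep = 0} :=
  stmt14_general q hq4 F hF Q hQ N hN P hP
end
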